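/- Let G₁ be a finite connected graph that is not complete, and let G₂ be a finite graph with at least one vertex. Then the connectivity of the lexicographic product satisfies κ(G₁∘G₂) = κ(G₁)·|V(G₂)|. -/

import Mathlib

/-- The lexicographic product of two simple graphs: `(x₁,y₁)` is adjacent to `(x₂,y₂)`
iff `x₁x₂` is an edge of `G`, or `x₁ = x₂` and `y₁y₂` is an edge of `H`. -/
def lexProd {V W : Type*} (G : SimpleGraph V) (H : SimpleGraph W) :
    SimpleGraph (V × W) where
  Adj p q := G.Adj p.1 q.1 ∨ (p.1 = q.1 ∧ H.Adj p.2 q.2)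
  symm := by
    constructor
    rintro ⟨x₁, y₁⟩ ⟨x₂, y₂⟩ (h | ⟨rfl, h⟩)
    · exact Or.inl h.symm
    · exact Or.inr ⟨rfl, h.symm⟩
  loopless := by
    constructor
    rintro ⟨x, y⟩ (h | ⟨-, h⟩)
    · exact G.irrefl h
    · exact H.irrefl h

/-- The set `V₀(G)` of isolated vertices of `G`. -/
def isoSet {V : Type*} (G : SimpleGraph V) : Set V := {v | ∀ w, ¬ G.Adj v w}

/-- The set of vertices of `G − S` that are isolated in `G − S`,
i.e. `V₀(G − S)` regarded as a subset of the vertices of `G`. -/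
def isolatedAfter {V : Type*} (G : SimpleGraph V) (S : Set V) : Set V :=
  {v | v ∉ S ∧ ∀ w ∉ S, ¬ G.Adj v w}

/-- `S` is a vertex-cut of `G`: deleting `S` leaves a disconnected graph, or reduces `G`
to the trivial one-vertex graph `K₁`. -/
def IsVertexCut {V : Type*} (G : SimpleGraph V) (S : Set V) : Prop :=
  (Sᶜ.Nonempty ∧ ¬ (G.induce Sᶜ).Connected) ∨ (∃ v, Sᶜ = {v})

/-- The connectivity `κ(G)`: the minimum cardinality of a vertex-cut of `G`. -/
noncomputable def graphConnectivity {V : Type*} (G : SimpleGraph V) : ℕ :=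
  sInf {n | ∃ S : Set V, IsVertexCut G S ∧ S.ncard = n}

/-- A minimum vertex-cut: a vertex-cut of cardinality `κ(G)`. -/
def IsMinVertexCut {V : Type*} (G : SimpleGraph V) (S : Set V) : Prop :=
  IsVertexCut G S ∧ S.ncard = graphConnectivity G

/-- A k₁-vertex-cut: a vertex-cut `S` such that `G − S` has no isolated vertices. -/
def IsK1VertexCut {V : Type*} (G : SimpleGraph V) (S : Set V) : Prop :=
  IsVertexCut G S ∧ ∀ v ∉ S, ∃ w ∉ S, G.Adj v w

/-- The k₁-connectivity `k₁(G)`, valued in `ℕ∞`; it is `⊤` (infinity) if `G`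
has no k₁-vertex-cut. -/
noncomputable def k1Connectivity {V : Type*} (G : SimpleGraph V) : ℕ∞ :=
  sInf {n : ℕ∞ | ∃ S : Set V, IsK1VertexCut G S ∧ (S.ncard : ℕ∞) = n}

/-- `G` is super connected if every minimum vertex-cut isolates a vertex,
i.e. some vertex of `G − S` has no neighbours in `G − S`. -/
def SuperConnected {V : Type*} (G : SimpleGraph V) : Prop :=
  ∀ S : Set V, IsMinVertexCut G S → ∃ v ∉ S, ∀ w ∉ S, ¬ G.Adj v w

/-!
A minimum vertex-cut `S` of `G₁` lifts to the vertex-cut `S × V(G₂)` of `G₁ ∘ G₂`.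
Conversely, let `T` be a vertex-cut of `G₁ ∘ G₂` and `S` the set of vertices of `G₁` whose whole
fibre lies in `T`, so `|S| · |V(G₂)| ≤ |T|`. If `|S| < κ(G₁)`, then `G₁ − S` is connected and,
since `κ(G₁) ≤ |V(G₁)| − 2` for non-complete `G₁`, has at least two vertices; every point of
`G₁ ∘ G₂ − T` is then adjacent to the points over the neighbours of its projection, so
`G₁ ∘ G₂ − T` is connected and has at least two vertices, a contradiction.
-/

open Set SimpleGraph

section VertexCut

variable {V : Type*} {G : SimpleGraph V} {S : Set V}

lemma IsVertexCut.not_connected (h : IsVertexCut G S) (hS : Sᶜ.Nontrivial) :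
    ¬ (G.induce Sᶜ).Connected := by
  rcases h with ⟨-, h⟩ | ⟨v, hv⟩
  · exact h
  · exact absurd (hv ▸ hS) not_nontrivial_singleton

lemma graphConnectivity_le (h : IsVertexCut G S) : graphConnectivity G ≤ S.ncard :=
  Nat.sInf_le ⟨S, h, rfl⟩

lemma le_graphConnectivity {n : ℕ} (hS : IsVertexCut G S)
    (h : ∀ T, IsVertexCut G T → n ≤ T.ncard) : n ≤ graphConnectivity G :=
  le_csInf ⟨_, S, hS, rfl⟩ (by rintro _ ⟨T, hT, rfl⟩; exact h T hT)

lemma isVertexCut_compl_pair {u w : V} (huw : u ≠ w) (h : ¬ G.Adj u w) :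
    IsVertexCut G {u, w}ᶜ := by
  refine Or.inl ⟨⟨u, by simp⟩, fun hc => ?_⟩
  rw [compl_compl] at hc
  have : Nontrivial ({u, w} : Set V) := (nontrivial_pair huw).coe_sort
  obtain ⟨⟨c, hc⟩, hadj⟩ := hc.preconnected.exists_adj_of_nontrivial ⟨u, by simp⟩
  change G.Adj u c at hadj
  rcases hc with rfl | rfl
  · exact G.irrefl hadj
  · exact h hadj

lemma exists_isMinVertexCut_of_ne_top (hG : G ≠ ⊤) : ∃ S, IsMinVertexCut G S := by
  obtain ⟨u, w, huw, h⟩ := ne_top_iff_exists_not_adj.mp hG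
  obtain ⟨S, hS, hcard⟩ := Nat.sInf_mem (⟨_, _, isVertexCut_compl_pair huw h, rfl⟩ :
    {n | ∃ S : Set V, IsVertexCut G S ∧ S.ncard = n}.Nonempty)
  exact ⟨S, hS, hcard⟩

lemma graphConnectivity_add_two_le [Finite V] (hG : G ≠ ⊤) :
    graphConnectivity G + 2 ≤ Nat.card V := by
  obtain ⟨u, w, huw, h⟩ := ne_top_iff_exists_not_adj.mp hG
  have hcut := graphConnectivity_le (isVertexCut_compl_pair huw h)
  have hsum := ncard_add_ncard_compl ({u, w} : Set V)
  rw [ncard_pair huw] at hsum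
  omega

lemma compl_nontrivial_of_ncard_le [Finite V] (hG : G ≠ ⊤)
    (hS : S.ncard ≤ graphConnectivity G) : Sᶜ.Nontrivial := by
  have hsum := ncard_add_ncard_compl S
  have hκ := graphConnectivity_add_two_le hG
  rw [← one_lt_ncard_iff_nontrivial]
  omega

end VertexCut

section LexProd

variable {V W : Type*} {G : SimpleGraph V} {H : SimpleGraph W} {T : Set (V × W)}

lemma ncard_preimage_fst (S : Set V) :
    (Prod.fst ⁻¹' S : Set (V × W)).ncard = S.ncard * Nat.card W := by
  rw [← prod_univ, ncard_prod, ncard_univ]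

lemma preconnected_induce_image_fst (h : ((lexProd G H).induce T).Preconnected) :
    (G.induce (Prod.fst '' T)).Preconnected := by
  rintro ⟨-, p, hp, rfl⟩ ⟨-, q, hq, rfl⟩
  let f : T → Prod.fst '' T := fun p => ⟨p.1.1, mem_image_of_mem _ p.2⟩
  have hpq := h ⟨p, hp⟩ ⟨q, hq⟩
  rw [reachable_iff_reflTransGen] at hpq ⊢
  refine Relation.ReflTransGen.lift' f (fun a b hab => ?_) _ _ hpq
  rcases hab with hab | ⟨heq, -⟩
  · exact .single hab
  · change Relation.ReflTransGen _ (f a) (f b)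
    rw [show f a = f b from Subtype.ext heq]

-- Sending each `x` to a chosen point of `T` over `x` is a graph homomorphism; every other point
-- of `T` over `x` is joined to the chosen points over the neighbours of `x`.
lemma preconnected_induce_of_image_fst (hU : (G.induce (Prod.fst '' T)).Preconnected)
    (hnt : (Prod.fst '' T).Nontrivial) : ((lexProd G H).induce T).Preconnected := by
  have : Nontrivial (Prod.fst '' T) := hnt.coe_sort
  choose σ hσT hσ using fun x : Prod.fst '' T => x.2
  let s : G.induce (Prod.fst '' T) →g (lexProd G H).induce T :=
    ⟨fun x => ⟨σ x, hσT x⟩,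
      fun {x y} hxy => Or.inl (show G.Adj (σ x).1 (σ y).1 by rwa [hσ, hσ])⟩
  have hs : ∀ p : T,
      ((lexProd G H).induce T).Reachable p (s ⟨p.1.1, mem_image_of_mem _ p.2⟩) := by
    intro p
    obtain ⟨x, hx⟩ := hU.exists_adj_of_nontrivial ⟨p.1.1, mem_image_of_mem _ p.2⟩
    have hpx : ((lexProd G H).induce T).Adj p (s x) :=
      Or.inl (show G.Adj p.1.1 (σ x).1 by rwa [hσ])
    exact hpx.reachable.trans (s.map_adj hx.symm).reachable
  exact fun p q => (hs p).trans (((hU _ _).map s).trans (hs q).symm)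

lemma connected_induce_lexProd_iff (hT : (Prod.fst '' T).Nontrivial) :
    ((lexProd G H).induce T).Connected ↔ (G.induce (Prod.fst '' T)).Connected := by
  have : Nonempty T := hT.nonempty.of_image.to_subtype
  have : Nonempty (Prod.fst '' T) := hT.nonempty.to_subtype
  simp only [connected_iff, and_iff_left (inferInstance : Nonempty _)]
  exact ⟨preconnected_induce_image_fst, (preconnected_induce_of_image_fst · hT)⟩

lemma IsVertexCut.preimage_fst [Nonempty W] {S : Set V} (hS : IsVertexCut G S)
    (hSc : Sᶜ.Nontrivial) : IsVertexCut (lexProd G H) (Prod.fst ⁻¹' S) := by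
  have himage : Prod.fst '' (Prod.fst ⁻¹' S : Set (V × W))ᶜ = Sᶜ := by
    rw [← preimage_compl, image_preimage_eq _ Prod.fst_surjective]
  have hdisc := hS.not_connected hSc
  rw [← himage] at hdisc hSc
  exact Or.inl ⟨hSc.nonempty.of_image, hdisc ∘ (connected_induce_lexProd_iff hSc).mp⟩

lemma graphConnectivity_mul_card_le [Finite V] [Finite W] (hG : G ≠ ⊤)
    (hT : IsVertexCut (lexProd G H) T) :
    graphConnectivity G * Nat.card W ≤ T.ncard := by
  set S := (Prod.fst '' Tᶜ)ᶜ
  by_contra! hlt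
  have hST : Prod.fst ⁻¹' S ⊆ T := fun p hp => by_contra fun h => hp (mem_image_of_mem _ h)
  have hS : S.ncard < graphConnectivity G := by
    have := ncard_le_ncard hST
    rw [ncard_preimage_fst] at this
    exact Nat.lt_of_mul_lt_mul_right (this.trans_lt hlt)
  have hSc := compl_nontrivial_of_ncard_le hG hS.le
  have hconn : (G.induce Sᶜ).Connected := by
    by_contra h
    exact (graphConnectivity_le (Or.inl ⟨hSc.nonempty, h⟩)).not_gt hS
  rw [compl_compl] at hSc hconn
  exact hT.not_connected (nontrivial_of_image _ _ hSc)
    ((connected_induce_lexProd_iff hSc).mpr hconn)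

end LexProd

theorem connectivity_lexProd_general {V W : Type*} [Fintype V] [Fintype W] [Nonempty W]
    (G₁ : SimpleGraph V) (G₂ : SimpleGraph W) (hnc : G₁ ≠ ⊤) :
    graphConnectivity (lexProd G₁ G₂) = graphConnectivity G₁ * Fintype.card W := by
  obtain ⟨S, hS, hSκ⟩ := exists_isMinVertexCut_of_ne_top hnc
  have hcut : IsVertexCut (lexProd G₁ G₂) (Prod.fst ⁻¹' S) :=
    hS.preimage_fst (compl_nontrivial_of_ncard_le hnc hSκ.le)
  rw [← Nat.card_eq_fintype_card]
  refine le_antisymm ?_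
    (le_graphConnectivity hcut fun T hT => graphConnectivity_mul_card_le hnc hT)
  calc graphConnectivity (lexProd G₁ G₂) ≤ (Prod.fst ⁻¹' S).ncard := graphConnectivity_le hcut
    _ = graphConnectivity G₁ * Nat.card W := by rw [ncard_preimage_fst, hSκ]

/-- κ(G₁∘G₂) = κ(G₁)·|V(G₂)| for connected non-complete G₁. -/
theorem connectivity_lexProd {V W : Type*} [Fintype V] [Fintype W] [Nonempty W]
    (G₁ : SimpleGraph V) (G₂ : SimpleGraph W)
    (hconn : G₁.Connected) (hnc : G₁ ≠ ⊤) :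
    graphConnectivity (lexProd G₁ G₂) = graphConnectivity G₁ * Fintype.card W :=
  connectivity_lexProd_general G₁ G₂ hnc
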